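/- Let A be a postassociative algebra with operations ≻, ≺, ·. Define [x,y] = x·y − y·x and x∘y = x≻y − y≺x. Then (A, [,], ∘) satisfies the post-Lie identities: [,] is a Lie bracket; (x∘y)∘z − x∘(y∘z) − (y∘x)∘z + y∘(x∘z) = [y,x]∘z; and x∘[y,z] = [x∘y, z] + [y, x∘z]. -/
import Mathlib


/-- A postassociative algebra with [x,y] = x·y − y·x and x∘y = x≻y − y≺x is a
post-Lie algebra. -/
theorem stmt15 (k A : Type*) [Field k] [AddCommGroup A] [Module k A]
    (s p m : A →ₗ[k] A →ₗ[k] A)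
    (H1 : ∀ x y z : A, p (p x y) z = p x (s y z + p y z + m y z))
    (H2 : ∀ x y z : A, p (s x y) z = s x (p y z))
    (H3 : ∀ x y z : A, s (s x y + p x y + m x y) z = s x (s y z))
    (H4 : ∀ x y z : A, s x (m y z) = m (s x y) z)
    (H5 : ∀ x y z : A, m (p x y) z = m x (s y z))
    (H6 : ∀ x y z : A, p (m x y) z = m x (p y z))
    (H7 : ∀ x y z : A, m (m x y) z = m x (m y z))
    (br c : A → A → A)
    (hbr : ∀ x y : A, br x y = m x y - m y x)
    (hc : ∀ x y : A, c x y = s x y - p y x) :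
    (∀ x y : A, br x y = - br y x) ∧
    (∀ x y z : A, br (br x y) z + br (br y z) x + br (br z x) y = 0) ∧
    (∀ x y z : A,
      c (c x y) z - c x (c y z) - c (c y x) z + c y (c x z) = c (br y x) z) ∧
    (∀ x y z : A, c x (br y z) = br (c x y) z + br y (c x z)) := by
  have H1' : ∀ x y z : A, p (p x y) z = p x (s y z) + p x (p y z) + p x (m y z) := by
    intro x y z; rw [H1]; simp [map_add]
  have H3' : ∀ x y z : A, s x (s y z) = s (s x y) z + s (p x y) z + s (m x y) z := by
    intro x y z; rw [← H3]; simp [map_add]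
  refine ⟨?_, ?_, ?_, ?_⟩
  · intro x y
    simp only [hbr]; abel
  · intro x y z
    simp only [hbr, map_sub, LinearMap.sub_apply, H7]; abel
  · intro x y z
    simp only [hbr, hc, map_sub, LinearMap.sub_apply, H1', H2, H3']
    abel
  · intro x y z
    simp only [hbr, hc, map_sub, LinearMap.sub_apply, H4, H5, H6]
    abel
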